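/- (Equivalence of explicit Runge–Kutta methods and signal-flow based periodic Runge–Kutta methods, Theorem 2.) For a time-driven ODE integrated with an explicit s-stage Runge–Kutta method with fixed step size h = T/p (p ∈ ℕ, p ≥ 1), the signal-flow based periodic Runge–Kutta method—which sets x_{I,i}^{m+1} = x_{I,i}^{m-p+1} whenever x_{I,i} is periodic of order s at t^m and otherwise performs the standard update x_{I,i}^{m+1} = x_{I,i}^m + h Φ_i(t^m, x^m, h)—produces, under exact computation, exactly the same sequence of iterates (x_E^m, x_I^m) as the standard explicit Runge–Kutta method started from the same initial value. -/
import Mathlib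


open Finset

/-- A variable `v` is periodic of order `ν ≥ 1` with respect to a semi-periodicity
predicate `semi` and input sets `pre`: it is periodic of order 1 if it and all variables
of its input set are semi-periodic, and periodic of order `ν` if it is moreover such that
all variables in its input set are (at least) periodic of order `ν - 1`.
(Order 0 is vacuous.) -/
def PeriodicOfOrder {V : Type*} (semi : V → Prop) (pre : V → Set V) : ℕ → V → Prop
  | 0, _ => True
  | 1, v => semi v ∧ ∀ w ∈ pre v, semi w
  | ν + 2, v => (semi v ∧ ∀ w ∈ pre v, semi w) ∧
      ∀ w ∈ pre v, PeriodicOfOrder semi pre (ν + 1) w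

lemma periodicOfOrder_semi {V : Type*} (semi : V → Prop) (pre : V → Set V)
    {ν : ℕ} (hν : 0 < ν) {v : V} (h : PeriodicOfOrder semi pre ν v) :
    semi v ∧ ∀ w ∈ pre v, semi w := by
  match ν, hν, h with
  | 1, _, h => exact h
  | (ν + 2), _, h => exact h.1

/-- Theorem 2: For a time-driven ODE integrated with an explicit `s`-stage
Runge–Kutta method with fixed step size `h = T/p` (`p ∈ ℕ`, `p ≥ 1`), the signal-flow
based periodic Runge–Kutta method `(yE, yI)` — which sets `y_{I,i}^{m+1} = y_{I,i}^{m-p+1}`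
whenever `y_{I,i}` is periodic of order `s` at `t^m` (with the periodicity states at `t^m`
determined by the method's own iterates) and otherwise performs the standard Runge–Kutta
update — produces, under exact computation, exactly the same sequence of iterates as the
standard explicit Runge–Kutta method `(xE, xI)` started from the same initial value. -/
theorem sfpRK_eq_RK
    {nE nI s : ℕ} (hs : 0 < s)
    (fE : ℝ → Fin nE → ℝ)
    (fI : (Fin nE → ℝ) → (Fin nI → ℝ) → Fin nI → ℝ)
    (a : Fin s → Fin s → ℝ) (b c : Fin s → ℝ)
    (hexplicit : ∀ q r : Fin s, q ≤ r → a q r = 0)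
    (hc1 : c ⟨0, hs⟩ = 0)
    (T h : ℝ) (p : ℕ) (hp : 1 ≤ p) (hT : h = T / p)
    (t : ℕ → ℝ) (ht : ∀ m, t (m + 1) = t m + h)
    -- the input sets and the dependency structure of the right-hand side
    (pre : Fin nE ⊕ Fin nI → Set (Fin nE ⊕ Fin nI))
    (hpreE : ∀ j : Fin nE, pre (Sum.inl j) = ∅)
    (hdep : ∀ (i : Fin nI) (u w : Fin nE → ℝ) (v z : Fin nI → ℝ),
        (∀ j : Fin nE, Sum.inl j ∈ pre (Sum.inr i) → u j = w j) →
        (∀ j : Fin nI, Sum.inr j ∈ pre (Sum.inr i) → v j = z j) →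
        fI u v i = fI w z i)
    -- the standard explicit Runge--Kutta method
    (xE : ℕ → Fin nE → ℝ) (xI : ℕ → Fin nI → ℝ)
    (kI : ℕ → Fin s → Fin nI → ℝ)
    (hxE : ∀ m, xE m = fE (t m))
    (hstage : ∀ (m : ℕ) (q : Fin s), kI m q =
        fI (fE (t m + c q * h))
          (fun i => xI m i +
            h * ∑ r ∈ univ.filter (fun r : Fin s => r < q), a q r * kI m r i))
    (hupdate : ∀ (m : ℕ) (i : Fin nI),
        xI (m + 1) i = xI m i + h * ∑ q, b q * kI m q i)
    -- the signal-flow based periodic Runge--Kutta method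
    (yE : ℕ → Fin nE → ℝ) (yI : ℕ → Fin nI → ℝ)
    (kJ : ℕ → Fin s → Fin nI → ℝ)
    (hyE : ∀ m, yE m = fE (t m))
    (hstageJ : ∀ (m : ℕ) (q : Fin s), kJ m q =
        fI (fE (t m + c q * h))
          (fun i => yI m i +
            h * ∑ r ∈ univ.filter (fun r : Fin s => r < q), a q r * kJ m r i))
    (hupdJ_periodic : ∀ (m : ℕ) (i : Fin nI), p ≤ m →
        PeriodicOfOrder
          (Sum.elim
            (fun j : Fin nE => ∀ r : Fin s,
              fE (t m + c r * h) j = fE (t (m - p) + c r * h) j)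
            (fun j : Fin nI => yI m j = yI (m - p) j))
          pre s (Sum.inr i) →
        yI (m + 1) i = yI (m - p + 1) i)
    (hupdJ_active : ∀ (m : ℕ) (i : Fin nI),
        ¬ (p ≤ m ∧ PeriodicOfOrder
          (Sum.elim
            (fun j : Fin nE => ∀ r : Fin s,
              fE (t m + c r * h) j = fE (t (m - p) + c r * h) j)
            (fun j : Fin nI => yI m j = yI (m - p) j))
          pre s (Sum.inr i)) →
        yI (m + 1) i = yI m i + h * ∑ q, b q * kJ m q i)
    -- same initial value
    (hinit : yI 0 = xI 0) :
    ∀ m : ℕ, yE m = xE m ∧ yI m = xI m := by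
  -- stages of the standard method coincide one fundamental period apart
  have hstageEq : ∀ m : ℕ, p ≤ m → ∀ ν : ℕ, ∀ i : Fin nI,
      PeriodicOfOrder
        (Sum.elim
          (fun j : Fin nE => ∀ r : Fin s,
            fE (t m + c r * h) j = fE (t (m - p) + c r * h) j)
          (fun j : Fin nI => xI m j = xI (m - p) j))
        pre ν (Sum.inr i) →
      ∀ q : Fin s, (q : ℕ) < ν → kI m q i = kI (m - p) q i := by
    intro m hm ν
    induction ν with
    | zero => intro i _ q hq; omega
    | succ ν IH =>
      cases ν with
      | zero =>
        intro i hper q hq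
        obtain ⟨hsi, hsw⟩ := hper
        have hfe : (univ.filter (fun r : Fin s => r < q)) = ∅ := by
          apply Finset.filter_eq_empty_iff.mpr
          intro r _ hr
          have h1 : (r : ℕ) < (q : ℕ) := hr
          omega
        rw [hstage m q, hstage (m - p) q]
        refine hdep i _ _ _ _ ?_ ?_
        · intro j hj
          exact hsw (Sum.inl j) hj q
        · intro j hj
          have h1 : xI m j = xI (m - p) j := hsw (Sum.inr j) hj
          simp [hfe, h1]
      | succ k =>
        intro i hper q hq
        obtain ⟨⟨hsi, hsw⟩, hord⟩ := hper
        rw [hstage m q, hstage (m - p) q]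
        refine hdep i _ _ _ _ ?_ ?_
        · intro j hj
          exact hsw (Sum.inl j) hj q
        · intro j hj
          have h1 : xI m j = xI (m - p) j := hsw (Sum.inr j) hj
          have h2 : ∀ r : Fin s, (r : ℕ) < k + 1 → kI m r j = kI (m - p) r j :=
            fun r hr => IH j (hord (Sum.inr j) hj) r hr
          rw [h1]
          have hsum : (∑ r ∈ univ.filter (fun r : Fin s => r < q), a q r * kI m r j)
              = ∑ r ∈ univ.filter (fun r : Fin s => r < q), a q r * kI (m - p) r j := by
            refine Finset.sum_congr rfl fun r hr => ?_
            have hrq : (r : ℕ) < (q : ℕ) := (Finset.mem_filter.mp hr).2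
            rw [h2 r (by omega)]
          rw [hsum]
  have key : ∀ m : ℕ, yI m = xI m := by
    intro m
    induction m using Nat.strong_induction_on with
    | _ m IH =>
      match m with
      | 0 => exact hinit
      | Nat.succ m =>
        have IHm : yI m = xI m := IH m (Nat.lt_succ_self m)
        funext i
        by_cases hcond : p ≤ m ∧ PeriodicOfOrder
            (Sum.elim
              (fun j : Fin nE => ∀ r : Fin s,
                fE (t m + c r * h) j = fE (t (m - p) + c r * h) j)
              (fun j : Fin nI => yI m j = yI (m - p) j))
            pre s (Sum.inr i)
        · obtain ⟨hpm, hper⟩ := hcond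
          have IHmp : yI (m - p) = xI (m - p) := IH (m - p) (by omega)
          have IHmp1 : yI (m - p + 1) = xI (m - p + 1) := IH (m - p + 1) (by omega)
          have hperx : PeriodicOfOrder
              (Sum.elim
                (fun j : Fin nE => ∀ r : Fin s,
                  fE (t m + c r * h) j = fE (t (m - p) + c r * h) j)
                (fun j : Fin nI => xI m j = xI (m - p) j))
              pre s (Sum.inr i) := by
            simpa only [IHm, IHmp] using hper
          have hx := hupdJ_periodic m i hpm hper
          rw [hx, IHmp1, hupdate m i, hupdate (m - p) i]
          obtain ⟨hsi, hsw⟩ := periodicOfOrder_semi _ _ hs hperx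
          have hxi : xI m i = xI (m - p) i := hsi
          rw [hxi]
          have hsum : (∑ q : Fin s, b q * kI (m - p) q i) = ∑ q : Fin s, b q * kI m q i := by
            refine Finset.sum_congr rfl fun q _ => ?_
            rw [hstageEq m hpm s i hperx q q.isLt]
          rw [hsum]
        · have hupd := hupdJ_active m i hcond
          have hk : ∀ n : ℕ, ∀ q : Fin s, (q : ℕ) < n → kJ m q = kI m q := by
            intro n
            induction n with
            | zero => intro q hq; omega
            | succ n IH2 =>
              intro q hq
              funext j
              rw [hstageJ m q, hstage m q]
              refine hdep j _ _ _ _ (fun _ _ => rfl) ?_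
              intro l _
              rw [IHm]
              have hsum : (∑ r ∈ univ.filter (fun r : Fin s => r < q), a q r * kJ m r l)
                  = ∑ r ∈ univ.filter (fun r : Fin s => r < q), a q r * kI m r l := by
                refine Finset.sum_congr rfl fun r hr => ?_
                have hrq : (r : ℕ) < (q : ℕ) := (Finset.mem_filter.mp hr).2
                rw [IH2 r (by omega)]
              rw [hsum]
          rw [hupd, IHm, hupdate m i]
          have hsum : (∑ q : Fin s, b q * kJ m q i) = ∑ q : Fin s, b q * kI m q i := by
            refine Finset.sum_congr rfl fun q _ => ?_
            rw [hk s q q.isLt]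
          rw [hsum]
  intro m
  exact ⟨by rw [hyE, hxE], key m⟩
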